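/- For every norm ⦀·⦀ on ℝ^d and every k ∈ {0,…,d}, the Capra biconjugate of the characteristic function δ_{L_k} of the level set L_k = {x ∈ ℝ^d : ℓ0(x) ≤ k} is the characteristic function of the set {x ∈ ℝ^d : ⦀x⦀_k = ⦀x⦀}: (δ_{L_k})^{¢¢'} = δ_{{x : ⦀x⦀_k = ⦀x⦀}}, with the convention that for k = 0 the coordinate-0 norm condition means x = 0 (i.e. B_0 = {0}). -/

import Mathlib

open scoped BigOperators

noncomputable section

/-- The Euclidean pairing `⟨x,y⟩ = ∑ i, x i * y i` on `Fin d → ℝ`. -/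
def dotp {d : ℕ} (x y : Fin d → ℝ) : ℝ := ∑ i, x i * y i

/-- The coordinate subspace `R_K` of vectors vanishing outside `K`. -/
def RK {d : ℕ} (K : Finset (Fin d)) : Set (Fin d → ℝ) := {x | ∀ j ∉ K, x j = 0}

/-- Orthogonal projection onto `R_K`. -/
def projK {d : ℕ} (K : Finset (Fin d)) (x : Fin d → ℝ) : Fin d → ℝ :=
  fun i => if i ∈ K then x i else 0

/-- The ℓ0 pseudonorm: number of nonzero components. -/
def ell0 {d : ℕ} (x : Fin d → ℝ) : ℕ := (Function.support x).ncard

/-- `N` is a norm on `ℝ^d`. -/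
structure IsNorm {d : ℕ} (N : (Fin d → ℝ) → ℝ) : Prop where
  eq_zero_iff : ∀ x, N x = 0 ↔ x = 0
  smul : ∀ (c : ℝ) (x : Fin d → ℝ), N (c • x) = |c| * N x
  triangle : ∀ x y, N (x + y) ≤ N x + N y

/-- `⦀y⦀_{K,★}`: the dual norm (w.r.t. the Euclidean pairing), on the subspace `R_K`,
of the restriction of `N` to `R_K`. -/
def restStar {d : ℕ} (N : (Fin d → ℝ) → ℝ) (K : Finset (Fin d)) (y : Fin d → ℝ) : ℝ :=
  sSup {r | ∃ x ∈ RK K, N x ≤ 1 ∧ r = dotp x y}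

/-- The dual coordinate-k norm `⦀y⦀_{k,★} = sup_{|K| ≤ k} ⦀y_K⦀_{K,★}`. -/
def dualCoord {d : ℕ} (N : (Fin d → ℝ) → ℝ) (k : ℕ) (y : Fin d → ℝ) : ℝ :=
  sSup {r | ∃ K : Finset (Fin d), K.card ≤ k ∧ r = restStar N K (projK K y)}

/-- The coordinate-k norm: the dual norm of the dual coordinate-k norm. -/
def coordNorm {d : ℕ} (N : (Fin d → ℝ) → ℝ) (k : ℕ) (x : Fin d → ℝ) : ℝ :=
  sSup {r | ∃ y : Fin d → ℝ, dualCoord N k y ≤ 1 ∧ r = dotp x y}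

/-- The Capra coupling `¢(x,y) = ⟨x,y⟩/⦀x⦀` (with `¢(0,y) = 0`). -/
def capra {d : ℕ} (N : (Fin d → ℝ) → ℝ) (x y : Fin d → ℝ) : ℝ :=
  if x = 0 then 0 else dotp x y / N x

/-- Capra conjugate `f^¢(y) = sup_x ( ¢(x,y) ∔ (−f(x)) )`.
(EReal addition is the Moreau lower addition: `⊤ + ⊥ = ⊥`.) -/
def capraConj {d : ℕ} (N : (Fin d → ℝ) → ℝ) (f : (Fin d → ℝ) → EReal)
    (y : Fin d → ℝ) : EReal :=
  ⨆ x : Fin d → ℝ, ((capra N x y : ℝ) : EReal) + (- f x)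

/-- Capra biconjugate `f^{¢¢'}(x) = sup_y ( ¢(x,y) ∔ (−f^¢(y)) )`. -/
def capraBiconj {d : ℕ} (N : (Fin d → ℝ) → ℝ) (f : (Fin d → ℝ) → EReal)
    (x : Fin d → ℝ) : EReal :=
  ⨆ y : Fin d → ℝ, ((capra N x y : ℝ) : EReal) + (- capraConj N f y)

/-- Fenchel conjugate `g^★(y) = sup_x ( ⟨x,y⟩ ∔ (−g(x)) )`. -/
def fenchelConj {d : ℕ} (g : (Fin d → ℝ) → EReal) (y : Fin d → ℝ) : EReal :=
  ⨆ x : Fin d → ℝ, ((dotp x y : ℝ) : EReal) + (- g x)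

open Classical in
/-- Characteristic function of a set: `0` on `C`, `+∞` outside. -/
def indic {d : ℕ} (C : Set (Fin d → ℝ)) : (Fin d → ℝ) → EReal :=
  fun x => if x ∈ C then 0 else ⊤

/-!
For `x` supported on a set `K` with `|K| ≤ k`, the coupling `¢(x, y) = ⟨x / ⦀x⦀, y_K⟩` runs over
the unit sphere of `⦀·⦀_K` paired with `y_K`, so the Capra conjugate of `δ_{L_k}` is the dual
coordinate-`k` norm `⦀·⦀_{k,★}`. The biconjugate at `x` is then the supremum over `y` of
`¢(x, y) - ⦀y⦀_{k,★}`, a positively homogeneous function of `y`: it is `0` when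
`¢(x, ·) ≤ ⦀·⦀_{k,★}` and `+∞` otherwise. For `k ≥ 1`, duality between `⦀·⦀_k` and `⦀·⦀_{k,★}`
turns `¢(x, ·) ≤ ⦀·⦀_{k,★}` into `⦀x⦀_k ≤ ⦀x⦀`, and the reverse inequality always holds by
Hahn–Banach. For `k = 0` the dual norm vanishes, and only `x = 0` satisfies `¢(x, ·) ≤ 0`.
-/

namespace IsNorm

variable {d : ℕ} {N : (Fin d → ℝ) → ℝ}

lemma map_zero (hN : IsNorm N) : N 0 = 0 := (hN.eq_zero_iff 0).mpr rfl

lemma map_neg (hN : IsNorm N) (x : Fin d → ℝ) : N (-x) = N x := by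
  simpa using hN.smul (-1) x

lemma nonneg (hN : IsNorm N) (x : Fin d → ℝ) : 0 ≤ N x := by
  have h := hN.triangle x (-x)
  rw [add_neg_cancel, hN.map_zero, hN.map_neg] at h
  linarith

lemma pos (hN : IsNorm N) {x : Fin d → ℝ} (hx : x ≠ 0) : 0 < N x :=
  (hN.nonneg x).lt_of_ne (Ne.symm fun h => hx ((hN.eq_zero_iff x).mp h))

def toAddGroupNorm (hN : IsNorm N) : AddGroupNorm (Fin d → ℝ) where
  toFun := N
  map_zero' := hN.map_zero
  add_le' := hN.triangle
  neg' := hN.map_neg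
  eq_zero_of_map_eq_zero' := fun x => (hN.eq_zero_iff x).mp

end IsNorm

/-- `ℝ^d` normed by `N` (once `IsNorm N` is known), so that the normed-space library applies. -/
def WithNorm {d : ℕ} (_N : (Fin d → ℝ) → ℝ) : Type := Fin d → ℝ

namespace WithNorm

variable {d : ℕ} {N : (Fin d → ℝ) → ℝ}

instance : AddCommGroup (WithNorm N) := inferInstanceAs (AddCommGroup (Fin d → ℝ))

instance : Module ℝ (WithNorm N) := inferInstanceAs (Module ℝ (Fin d → ℝ))

instance : FiniteDimensional ℝ (WithNorm N) :=
  inferInstanceAs (FiniteDimensional ℝ (Fin d → ℝ))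

instance [h : Fact (IsNorm N)] : NormedAddCommGroup (WithNorm N) :=
  @AddGroupNorm.toNormedAddCommGroup (WithNorm N) _ h.out.toAddGroupNorm

instance [h : Fact (IsNorm N)] : NormedSpace ℝ (WithNorm N) :=
  { norm_smul_le := fun c x => (h.out.smul c x).le }

def toWithNorm : (Fin d → ℝ) ≃ₗ[ℝ] WithNorm N := LinearEquiv.refl ℝ _

lemma norm_toWithNorm [Fact (IsNorm N)] (x : Fin d → ℝ) : ‖(toWithNorm x : WithNorm N)‖ = N x :=
  rfl

end WithNorm

lemma dotp_eq_dotProduct {d : ℕ} (x y : Fin d → ℝ) : dotp x y = x ⬝ᵥ y := rfl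

namespace IsNorm

open WithNorm

variable {d : ℕ} {N : (Fin d → ℝ) → ℝ}

lemma exists_dotp_le_mul (hN : IsNorm N) (y : Fin d → ℝ) :
    ∃ C ≥ 0, ∀ x, dotp x y ≤ C * N x := by
  have : Fact (IsNorm N) := ⟨hN⟩
  let ℓ : WithNorm N →L[ℝ] ℝ :=
    LinearMap.toContinuousLinearMap (dotProductEquiv ℝ (Fin d) y ∘ₗ toWithNorm.symm.toLinearMap)
  refine ⟨‖ℓ‖, norm_nonneg ℓ, fun x => ?_⟩
  calc dotp x y = ℓ (toWithNorm x) := by simp [ℓ, dotp_eq_dotProduct, dotProduct_comm]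
    _ ≤ ‖ℓ‖ * N x := (le_abs_self _).trans ((ℓ.le_opNorm _).trans_eq (by rw [norm_toWithNorm]))

lemma exists_dotp_eq (hN : IsNorm N) (x : Fin d → ℝ) :
    ∃ y, dotp x y = N x ∧ ∀ z, dotp z y ≤ N z := by
  have : Fact (IsNorm N) := ⟨hN⟩
  by_cases hx : x = 0
  · exact ⟨0, by simp [hx, hN.map_zero, dotp], fun z => by simpa [dotp] using hN.nonneg z⟩
  obtain ⟨g, hg, hgx⟩ := exists_dual_vector ℝ (toWithNorm x : WithNorm N)
    (by rw [norm_toWithNorm]; exact (hN.pos hx).ne')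
  let y := (dotProductEquiv ℝ (Fin d)).symm ((g : WithNorm N →ₗ[ℝ] ℝ) ∘ₗ toWithNorm.toLinearMap)
  have hgy (z : Fin d → ℝ) : g (toWithNorm z) = dotp z y := by
    have := LinearMap.congr_fun ((dotProductEquiv ℝ (Fin d)).apply_symm_apply
      ((g : WithNorm N →ₗ[ℝ] ℝ) ∘ₗ toWithNorm.toLinearMap)) z
    rw [dotp_eq_dotProduct, dotProduct_comm]
    exact this.symm
  refine ⟨y, ?_, fun z => ?_⟩
  · rw [← hgy, hgx, norm_toWithNorm]
    rfl
  · calc dotp z y = g (toWithNorm z) := (hgy z).symm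
      _ ≤ ‖g (toWithNorm z)‖ := le_abs_self _
      _ ≤ ‖g‖ * ‖(toWithNorm z : WithNorm N)‖ := g.le_opNorm _
      _ = N z := by rw [hg, one_mul, norm_toWithNorm]

end IsNorm

section DualCoordinateNorm

variable {d : ℕ} {N : (Fin d → ℝ) → ℝ} {k : ℕ} {K : Finset (Fin d)} {x y : Fin d → ℝ}

lemma dotp_projK_right (hx : x ∈ RK K) (y : Fin d → ℝ) : dotp x (projK K y) = dotp x y := by
  refine Finset.sum_congr rfl fun i _ => ?_
  by_cases hi : i ∈ K <;> simp [projK, hi, hx i]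

lemma projK_smul (K : Finset (Fin d)) (c : ℝ) (y : Fin d → ℝ) :
    projK K (c • y) = c • projK K y := by
  funext i
  by_cases hi : i ∈ K <;> simp [projK, hi]

lemma ell0_le_card_of_mem_RK (hx : x ∈ RK K) : ell0 x ≤ K.card := by
  rw [ell0, ← Set.ncard_coe_finset]
  exact Set.ncard_le_ncard fun j hj => by_contra fun hjK => hj (hx j hjK)

lemma exists_mem_RK_of_ell0_le (hx : ell0 x ≤ k) : ∃ K : Finset (Fin d), K.card ≤ k ∧ x ∈ RK K :=
  ⟨(Set.toFinite (Function.support x)).toFinset,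
    by rwa [← Set.ncard_eq_toFinset_card], fun j hj => by simpa using hj⟩

lemma le_restStar (hN : IsNorm N) (hx : x ∈ RK K) (hNx : N x ≤ 1) (y : Fin d → ℝ) :
    dotp x y ≤ restStar N K y := by
  obtain ⟨C, hC0, hC⟩ := hN.exists_dotp_le_mul y
  refine le_csSup ⟨C, ?_⟩ ⟨x, hx, hNx, rfl⟩
  rintro _ ⟨z, -, hz, rfl⟩
  exact (hC z).trans (mul_le_of_le_one_right hC0 hz)

lemma restStar_le (hN : IsNorm N) {B : ℝ} (h : ∀ x ∈ RK K, N x ≤ 1 → dotp x y ≤ B) :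
    restStar N K y ≤ B := by
  refine csSup_le ⟨0, 0, fun _ _ => rfl, by simp [hN.map_zero], by simp [dotp]⟩ ?_
  rintro _ ⟨x, hx, hNx, rfl⟩
  exact h x hx hNx

lemma dotp_le_mul_restStar (hN : IsNorm N) (hx : x ∈ RK K) (y : Fin d → ℝ) :
    dotp x y ≤ N x * restStar N K y := by
  by_cases hx0 : x = 0
  · simp [hx0, hN.map_zero, dotp]
  have hNx := hN.pos hx0
  have hunit : N ((N x)⁻¹ • x) ≤ 1 := by
    rw [hN.smul, abs_of_pos (inv_pos.mpr hNx), inv_mul_cancel₀ hNx.ne']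
  have hmem : (N x)⁻¹ • x ∈ RK K := fun j hj => by simp [hx j hj]
  have := le_restStar hN hmem hunit y
  rw [dotp_eq_dotProduct, smul_dotProduct, smul_eq_mul, ← dotp_eq_dotProduct] at this
  rwa [← inv_mul_le_iff₀ hNx]

lemma le_dualCoord (hK : K.card ≤ k) (y : Fin d → ℝ) :
    restStar N K (projK K y) ≤ dualCoord N k y :=
  have hfin := (Set.finite_range fun K : Finset (Fin d) => restStar N K (projK K y)).subset
    (t := {r | ∃ K : Finset (Fin d), K.card ≤ k ∧ r = restStar N K (projK K y)})
    (fun _ ⟨K, _, hr⟩ => ⟨K, hr.symm⟩)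
  le_csSup hfin.bddAbove ⟨K, hK, rfl⟩

lemma dualCoord_le {B : ℝ} (h : ∀ K : Finset (Fin d), K.card ≤ k → restStar N K (projK K y) ≤ B) :
    dualCoord N k y ≤ B := by
  refine csSup_le ⟨_, ∅, Nat.zero_le k, rfl⟩ ?_
  rintro _ ⟨K, hK, rfl⟩
  exact h K hK

lemma dotp_le_mul_dualCoord (hN : IsNorm N) (hK : K.card ≤ k) (hx : x ∈ RK K)
    (y : Fin d → ℝ) : dotp x y ≤ N x * dualCoord N k y := by
  rw [← dotp_projK_right hx]
  exact (dotp_le_mul_restStar hN hx _).trans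
    (mul_le_mul_of_nonneg_left (le_dualCoord hK y) (hN.nonneg x))

lemma dualCoord_nonneg (hN : IsNorm N) (k : ℕ) (y : Fin d → ℝ) : 0 ≤ dualCoord N k y :=
  calc 0 = dotp 0 (projK ∅ y) := by simp [dotp]
    _ ≤ restStar N ∅ (projK ∅ y) :=
      le_restStar hN (x := 0) (fun _ _ => rfl) (by simp [hN.map_zero]) _
    _ ≤ dualCoord N k y := le_dualCoord (Nat.zero_le k) y

lemma dualCoord_smul_le (hN : IsNorm N) {t : ℝ} (ht : 0 ≤ t) (y : Fin d → ℝ) :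
    dualCoord N k (t • y) ≤ t * dualCoord N k y := by
  refine dualCoord_le fun K hK => restStar_le hN fun x hx hNx => ?_
  rw [projK_smul, dotp_eq_dotProduct, dotProduct_smul, smul_eq_mul, ← dotp_eq_dotProduct]
  exact mul_le_mul_of_nonneg_left ((le_restStar hN hx hNx _).trans (le_dualCoord hK y)) ht

lemma dualCoord_zero_right (hN : IsNorm N) : dualCoord N k 0 = 0 :=
  le_antisymm (by simpa using dualCoord_smul_le (k := k) hN le_rfl (0 : Fin d → ℝ))
    (dualCoord_nonneg hN k 0)

lemma dualCoord_zero_left (hN : IsNorm N) (y : Fin d → ℝ) : dualCoord N 0 y = 0 := by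
  refine le_antisymm (dualCoord_le fun K hK => restStar_le hN fun x hx _ => ?_)
    (dualCoord_nonneg hN 0 y)
  obtain rfl : x = 0 := funext fun j => hx j (by simp [Finset.card_eq_zero.mp (Nat.le_zero.mp hK)])
  simp [dotp]

lemma abs_le_mul_dualCoord (hN : IsNorm N) (hk : 1 ≤ k) (y : Fin d → ℝ) (i : Fin d) :
    |y i| ≤ N (Pi.single i 1) * dualCoord N k y := by
  have hsingle (a : ℝ) : Pi.single i a ∈ RK {i} := fun j hj => by
    simp [Finset.mem_singleton.not.mp hj]
  have hdotp (a : ℝ) : dotp (Pi.single i a) y = a * y i := by simp [dotp_eq_dotProduct]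
  have hcard : ({i} : Finset (Fin d)).card ≤ k := by simpa using hk
  rw [abs_le']
  constructor
  · simpa [hdotp] using dotp_le_mul_dualCoord hN hcard (hsingle 1) y
  · have := dotp_le_mul_dualCoord hN hcard (hsingle (-1)) y
    rwa [hdotp, Pi.single_neg, hN.map_neg, neg_one_mul] at this

end DualCoordinateNorm

section CoordinateNorm

variable {d : ℕ} {N : (Fin d → ℝ) → ℝ} {k : ℕ} {x y : Fin d → ℝ}

lemma le_coordNorm (hN : IsNorm N) (hk : 1 ≤ k) (hy : dualCoord N k y ≤ 1) (x : Fin d → ℝ) :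
    dotp x y ≤ coordNorm N k x := by
  refine le_csSup ⟨∑ i, |x i| * N (Pi.single i 1), ?_⟩ ⟨y, hy, rfl⟩
  rintro _ ⟨z, hz, rfl⟩
  refine Finset.sum_le_sum fun i _ => ?_
  calc x i * z i ≤ |x i| * |z i| := (le_abs_self _).trans_eq (abs_mul _ _)
    _ ≤ |x i| * (N (Pi.single i 1) * 1) := by
      gcongr
      exact (abs_le_mul_dualCoord hN hk z i).trans
        (mul_le_mul_of_nonneg_left hz (hN.nonneg _))
    _ = |x i| * N (Pi.single i 1) := by rw [mul_one]

lemma coordNorm_le (hN : IsNorm N) {B : ℝ} (h : ∀ y, dualCoord N k y ≤ 1 → dotp x y ≤ B) :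
    coordNorm N k x ≤ B := by
  refine csSup_le ⟨_, 0, by simp [dualCoord_zero_right hN], rfl⟩ ?_
  rintro _ ⟨y, hy, rfl⟩
  exact h y hy

lemma dotp_le_coordNorm_mul_dualCoord (hN : IsNorm N) (hk : 1 ≤ k) (x y : Fin d → ℝ) :
    dotp x y ≤ coordNorm N k x * dualCoord N k y := by
  rcases (dualCoord_nonneg hN k y).eq_or_lt with hD | hD
  · obtain rfl : y = 0 := funext fun i => abs_nonpos_iff.mp <| by
      simpa [← hD] using abs_le_mul_dualCoord hN hk y i
    simp [dotp, dualCoord_zero_right hN]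
  have hunit : dualCoord N k ((dualCoord N k y)⁻¹ • y) ≤ 1 :=
    (dualCoord_smul_le hN (inv_nonneg.mpr hD.le) y).trans_eq (inv_mul_cancel₀ hD.ne')
  have := le_coordNorm hN hk hunit x
  rw [dotp_eq_dotProduct, dotProduct_smul, smul_eq_mul, ← dotp_eq_dotProduct,
    inv_mul_le_iff₀ hD, mul_comm] at this
  exact this

lemma le_coordNorm_self (hN : IsNorm N) (hk : 1 ≤ k) (x : Fin d → ℝ) : N x ≤ coordNorm N k x := by
  obtain ⟨y, hxy, hy⟩ := hN.exists_dotp_eq x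
  have hunit : dualCoord N k y ≤ 1 := dualCoord_le fun K _ => restStar_le hN fun z hz hNz => by
    rw [dotp_projK_right hz]
    exact (hy z).trans hNz
  exact hxy ▸ le_coordNorm hN hk hunit x

lemma forall_dotp_le_mul_dualCoord_iff (hN : IsNorm N) (hk : 1 ≤ k) :
    (∀ y, dotp x y ≤ N x * dualCoord N k y) ↔ coordNorm N k x ≤ N x := by
  refine ⟨fun h => coordNorm_le hN fun y hy => ?_, fun h y => ?_⟩
  · exact (h y).trans (mul_le_of_le_one_right (hN.nonneg x) hy)
  · exact (dotp_le_coordNorm_mul_dualCoord hN hk x y).trans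
      (mul_le_mul_of_nonneg_right h (dualCoord_nonneg hN k y))

end CoordinateNorm

section Capra

variable {d : ℕ} {N : (Fin d → ℝ) → ℝ} {k : ℕ} {x y : Fin d → ℝ}

lemma capra_smul_right (N : (Fin d → ℝ) → ℝ) (x y : Fin d → ℝ) (t : ℝ) :
    capra N x (t • y) = t * capra N x y := by
  by_cases hx : x = 0
  · simp [capra, hx]
  · simp [capra, hx, dotp_eq_dotProduct, mul_div_assoc]

lemma capra_le_iff (hN : IsNorm N) {c : ℝ} (hc : 0 ≤ c) :
    capra N x y ≤ c ↔ dotp x y ≤ N x * c := by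
  by_cases hx : x = 0
  · simp [capra, hx, dotp, hN.map_zero, hc]
  · rw [capra, if_neg hx, div_le_iff₀ (hN.pos hx), mul_comm]

lemma capra_le_dualCoord_of_ell0_le (hN : IsNorm N) (hx : ell0 x ≤ k) (y : Fin d → ℝ) :
    capra N x y ≤ dualCoord N k y := by
  obtain ⟨K, hK, hxK⟩ := exists_mem_RK_of_ell0_le hx
  exact (capra_le_iff hN (dualCoord_nonneg hN k y)).mpr (dotp_le_mul_dualCoord hN hK hxK y)

lemma dualCoord_le_of_forall_capra_le (hN : IsNorm N) {s : ℝ}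
    (h : ∀ x, ell0 x ≤ k → capra N x y ≤ s) : dualCoord N k y ≤ s := by
  have hs : 0 ≤ s := by simpa [capra] using h 0 (by simp [ell0])
  refine dualCoord_le fun K hK => restStar_le hN fun x hx hNx => ?_
  rw [dotp_projK_right hx]
  calc dotp x y ≤ N x * s :=
        (capra_le_iff hN hs).mp (h x ((ell0_le_card_of_mem_RK hx).trans hK))
    _ ≤ s := mul_le_of_le_one_left hs hNx

lemma capraConj_indic_ell0_le (hN : IsNorm N) (k : ℕ) (y : Fin d → ℝ) :
    capraConj N (indic {x | ell0 x ≤ k}) y = dualCoord N k y := by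
  refine le_antisymm (iSup_le fun x => ?_) (EReal.le_of_forall_lt_iff_le.mp fun s hs => ?_)
  · by_cases hx : ell0 x ≤ k
    · simpa [indic, hx] using capra_le_dualCoord_of_ell0_le hN hx y
    · simp [indic, hx]
  · refine EReal.coe_le_coe_iff.mpr (dualCoord_le_of_forall_capra_le hN fun x hx => ?_)
    refine EReal.coe_le_coe_iff.mp ((le_iSup_of_le x ?_).trans hs.le)
    simp [indic, hx]

lemma capraBiconj_indic_ell0_le (hN : IsNorm N) (k : ℕ) (x : Fin d → ℝ) :
    capraBiconj N (indic {x | ell0 x ≤ k}) x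
      = ⨆ y, ((capra N x y - dualCoord N k y : ℝ) : EReal) := by
  simp only [capraBiconj, capraConj_indic_ell0_le hN]
  simp_rw [EReal.coe_sub, sub_eq_add_neg]

lemma forall_capra_le_dualCoord_zero_iff (hN : IsNorm N) :
    (∀ y, capra N x y ≤ dualCoord N 0 y) ↔ x = 0 := by
  simp only [dualCoord_zero_left hN]
  refine ⟨fun h => ?_, fun hx y => by simp [capra, hx]⟩
  have hxx : dotp x x ≤ 0 := by simpa using (capra_le_iff hN le_rfl).mp (h x)
  exact dotProduct_self_eq_zero.mp
    (hxx.antisymm (Finset.sum_nonneg fun i _ => mul_self_nonneg (x i)))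

lemma forall_capra_le_dualCoord_iff (hN : IsNorm N) (hk : 1 ≤ k) :
    (∀ y, capra N x y ≤ dualCoord N k y) ↔ coordNorm N k x = N x := by
  simp only [capra_le_iff hN (dualCoord_nonneg hN k _), forall_dotp_le_mul_dualCoord_iff hN hk]
  exact ⟨fun h => h.antisymm (le_coordNorm_self hN hk x), le_of_eq⟩

end Capra

open Classical in
lemma iSup_coe_eq_ite_of_le_smul {E : Type*} [AddCommGroup E] [Module ℝ E] {h : E → ℝ}
    (hsmul : ∀ t : ℝ, 0 ≤ t → ∀ y, t * h y ≤ h (t • y)) :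
    ⨆ y, (h y : EReal) = if ∀ y, h y ≤ 0 then 0 else ⊤ := by
  split_ifs with hle
  · refine le_antisymm (iSup_le fun y => EReal.coe_nonpos.mpr (hle y)) (le_iSup_of_le 0 ?_)
    exact EReal.coe_nonneg.mpr (by simpa using hsmul 0 le_rfl 0)
  obtain ⟨y₀, hy₀⟩ := not_forall.mp hle
  rw [not_le] at hy₀
  refine iSup_eq_top.mpr fun b hb => ?_
  obtain ⟨r, hbr, -⟩ := EReal.lt_iff_exists_real_btwn.mp hb
  obtain ⟨n, hn⟩ := exists_nat_gt (r / h y₀)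
  refine ⟨(n : ℝ) • y₀, hbr.trans (EReal.coe_lt_coe_iff.mpr ?_)⟩
  calc r < n * h y₀ := (div_lt_iff₀ hy₀).mp hn
    _ ≤ h ((n : ℝ) • y₀) := hsmul n n.cast_nonneg y₀

theorem statement15_general {d : ℕ} (N : (Fin d → ℝ) → ℝ) (hN : IsNorm N) (k : ℕ) :
    capraBiconj N (indic {x : Fin d → ℝ | ell0 x ≤ k})
      = indic (if k = 0 then ({0} : Set (Fin d → ℝ))
               else {x : Fin d → ℝ | coordNorm N k x = N x}) := by
  classical
  funext x
  have hsmul (t : ℝ) (ht : 0 ≤ t) (y : Fin d → ℝ) :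
      t * (capra N x y - dualCoord N k y) ≤ capra N x (t • y) - dualCoord N k (t • y) := by
    rw [capra_smul_right, mul_sub]
    linarith [dualCoord_smul_le (k := k) hN ht y]
  have hmem : (∀ y, capra N x y - dualCoord N k y ≤ 0) ↔
      x ∈ (if k = 0 then ({0} : Set (Fin d → ℝ))
        else {x : Fin d → ℝ | coordNorm N k x = N x}) := by
    simp only [sub_nonpos]
    split_ifs with hk
    · subst hk
      exact (forall_capra_le_dualCoord_zero_iff hN).trans Set.mem_singleton_iff.symm
    · exact forall_capra_le_dualCoord_iff hN (Nat.one_le_iff_ne_zero.mpr hk)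
  rw [capraBiconj_indic_ell0_le hN, iSup_coe_eq_ite_of_le_smul (hsmul · ·), indic]
  exact if_congr hmem rfl rfl

theorem statement15 {d : ℕ} (N : (Fin d → ℝ) → ℝ) (hN : IsNorm N) (k : ℕ) (hk : k ≤ d) :
    capraBiconj N (indic {x : Fin d → ℝ | ell0 x ≤ k})
      = indic (if k = 0 then ({0} : Set (Fin d → ℝ))
               else {x : Fin d → ℝ | coordNorm N k x = N x}) :=
  statement15_general N hN k
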